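/- arXiv:1410.7032 — 2 statements merged into one kernel-verified Lean document; each statement's English description precedes it below -/
import Mathlib

section
/- In the same setting (irreducible P, ratios c_{ij}, positive initial vector), with m_σ = q_{σ_1}p_σ and u_k, l_k as above, define for each word σ of length k the quantity ζ(σ) := m_σ (log m_σ − u_k). If Λ_j is the stopping set {σ : p_{σ^-} ≥ p̲^j > p_σ} and C_1 is the uniform bound on |ξ(i,n) − ξ(j,n)|, then |Σ_{σ ∈ Λ_j} m_σ (log m_σ − u_{|σ|})| ≤ C_1, i.e., Σ_{σ∈Λ_j} m_σ u_{|σ|} − C_1 ≤ Σ_{σ∈Λ_j} m_σ log m_σ ≤ Σ_{σ∈Λ_j} m_σ u_{|σ|} + C_1. -/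
open Finset

/-- Product of transition weights along a word (list of letters). -/
def pword {N : ℕ} (P : Matrix (Fin N) (Fin N) ℝ) (l : List (Fin N)) : ℝ :=
  ((l.zip l.tail).map fun ab => P ab.1 ab.2).prod

/-- Admissible word: nonempty and positive transition weight along consecutive pairs. -/
def adm {N : ℕ} (P : Matrix (Fin N) (Fin N) ℝ) (l : List (Fin N)) : Prop :=
  l ≠ [] ∧ l.Chain' fun a b => 0 < P a b

/-- `m_σ = q_{σ_1} p_σ`. -/
def mlist {N : ℕ} (q : Fin N → ℝ) (P : Matrix (Fin N) (Fin N) ℝ)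
    (l : List (Fin N)) : ℝ :=
  (l.map q).headI * pword P l

/-- `ξ(i,n)`, sum over all words of length `n+1` starting at `i` (convention `0 log 0 = 0`). -/
noncomputable def xi {N : ℕ} (P : Matrix (Fin N) (Fin N) ℝ) (i : Fin N) (n : ℕ) : ℝ :=
  ∑ τ ∈ Finset.univ.filter (fun τ : Fin (n + 1) → Fin N => τ 0 = i),
    (∏ t : Fin n, P (τ t.castSucc) (τ t.succ)) *
      Real.log (∏ t : Fin n, P (τ t.castSucc) (τ t.succ))

/-- Product of the entries of `A` along a word of length `k+1`. -/
noncomputable def wprod {N k : ℕ} (A : Matrix (Fin N) (Fin N) ℝ)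
    (σ : Fin (k + 1) → Fin N) : ℝ :=
  ∏ t : Fin k, A (σ t.castSucc) (σ t.succ)

/-- `u_k = ∑_{σ ∈ G_k} m_σ log m_σ` (convention `0 log 0 = 0`). -/
noncomputable def useq {N : ℕ} (q : Fin N → ℝ) (P : Matrix (Fin N) (Fin N) ℝ)
    (k : ℕ) : ℝ :=
  ∑ σ : Fin (k - 1 + 1) → Fin N,
    (q (σ 0) * wprod P σ) * Real.log (q (σ 0) * wprod P σ)

/-!
Path weights decay geometrically: irreducibility forbids a cycle made only of transitions of
probability one (unless every positive entry is one, in which case `Λ j` is empty), so any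
`N + 1` consecutive letters carry a factor `≤ θ < 1`. Hence `Λ j` is finite and, for `K` longer
than all its words, every admissible word of length `K` has exactly one prefix in `Λ j`.
Summing the telescoping identity over `Λ j` gives
`u_K = ∑_σ (m_σ log m_σ + m_σ ξ(σ_last, K - |σ|))`, while summing it over all words of
length `k = |σ|` gives `u_K = u_k + ∑_ρ m_ρ ξ(ρ_last, K - k)`. Since `∑_{σ ∈ Λ j} m_σ = 1`,
the sum in question equals `∑_σ m_σ (∑_ρ m_ρ ξ(ρ_last, K - |σ|) - ξ(σ_last, K - |σ|))`,
a mass-one average of deviations of `ξ`, each bounded by `C1`.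
-/

def words (α : Type*) [Fintype α] (n : ℕ) : Finset (List α) :=
  (Finset.univ : Finset (Fin n → α)).map ⟨List.ofFn, List.ofFn_injective⟩

section Words

variable {α : Type*} [Fintype α]

@[simp]
lemma mem_words {n : ℕ} {l : List α} : l ∈ words α n ↔ l.length = n := by
  refine ⟨?_, fun h => ?_⟩
  · simp only [words, Finset.mem_map, Finset.mem_univ, true_and, Function.Embedding.coeFn_mk]
    rintro ⟨τ, rfl⟩
    exact List.length_ofFn
  · subst h
    exact Finset.mem_map.2 ⟨l.get, Finset.mem_univ _, List.ofFn_get l⟩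

lemma sum_words {M : Type*} [AddCommMonoid M] (n : ℕ) (f : List α → M) :
    ∑ l ∈ words α n, f l = ∑ τ : Fin n → α, f (List.ofFn τ) :=
  Finset.sum_map _ _ _

lemma sum_words_zero {M : Type*} [AddCommMonoid M] (f : List α → M) :
    ∑ l ∈ words α 0, f l = f [] := by
  simp [sum_words]

lemma sum_words_succ {M : Type*} [AddCommMonoid M] (n : ℕ) (f : List α → M) :
    ∑ l ∈ words α (n + 1), f l = ∑ a, ∑ v ∈ words α n, f (a :: v) := by
  rw [sum_words, ← Fintype.sum_equiv (Fin.consEquiv fun _ => α) _ _ fun _ => rfl,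
    Fintype.sum_prod_type]
  simp [sum_words, Fin.consEquiv_apply]

lemma sum_words_add {M : Type*} [AddCommMonoid M] (m n : ℕ) (f : List α → M) :
    ∑ l ∈ words α (m + n), f l = ∑ u ∈ words α m, ∑ v ∈ words α n, f (u ++ v) := by
  induction m generalizing f with
  | zero => simp [sum_words_zero]
  | succ m ih => simp only [Nat.succ_add, sum_words_succ, ih, List.cons_append]

lemma sum_words_eq_sum_prefix {M : Type*} [AddCommMonoid M] (Λ : Finset (List α)) (K : ℕ)
    (g : List α → M) (hlen : ∀ σ ∈ Λ, σ.length ≤ K)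
    (hsec : ∀ τ ∈ words α K, g τ ≠ 0 → ∃! σ, σ ∈ Λ ∧ σ <+: τ) :
    ∑ τ ∈ words α K, g τ = ∑ σ ∈ Λ, ∑ v ∈ words α (K - σ.length), g (σ ++ v) := by
  classical
  have hext : ∀ σ ∈ Λ, ∑ v ∈ words α (K - σ.length), g (σ ++ v)
      = ∑ τ ∈ words α K, if σ <+: τ then g τ else 0 := by
    intro σ hσ
    rw [← Finset.sum_filter]
    refine Finset.sum_nbij' (σ ++ ·) (List.drop σ.length) ?_ ?_ ?_ ?_ fun _ _ => rfl
    · intro v hv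
      simp only [mem_words, Finset.mem_filter, List.length_append] at hv ⊢
      exact ⟨by have := hlen σ hσ; omega, List.prefix_append σ v⟩
    · intro τ hτ
      simp only [mem_words, Finset.mem_filter, List.length_drop] at hτ ⊢
      omega
    · intro v _
      exact List.drop_left
    · intro τ hτ
      exact List.prefix_iff_eq_append.1 (Finset.mem_filter.1 hτ).2
  rw [Finset.sum_congr rfl hext, Finset.sum_comm]
  refine Finset.sum_congr rfl fun τ hτ => ?_
  by_cases hg : g τ = 0
  · simp [hg]
  obtain ⟨σ, ⟨hσ, hστ⟩, huniq⟩ := hsec τ hτ hg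
  rw [Finset.sum_eq_single_of_mem σ hσ fun σ' hσ' hne => if_neg fun h => hne (huniq σ' ⟨hσ', h⟩),
    if_pos hστ]

end Words

section PathWeight

variable {N : ℕ} {P : Matrix (Fin N) (Fin N) ℝ}

@[simp]
lemma pword_nil : pword P [] = 1 := rfl

@[simp]
lemma pword_singleton (a : Fin N) : pword P [a] = 1 := rfl

@[simp]
lemma pword_cons_cons (a b : Fin N) (l : List (Fin N)) :
    pword P (a :: b :: l) = P a b * pword P (b :: l) := rfl

lemma pword_append {u : List (Fin N)} (hu : u ≠ []) (v : List (Fin N)) :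
    pword P (u ++ v) = pword P u * pword P (u.getLast hu :: v) := by
  induction u with
  | nil => exact absurd rfl hu
  | cons a u ih =>
    rcases u with _ | ⟨b, u⟩
    · simp
    · simp only [List.cons_append, pword_cons_cons, List.getLast_cons_cons]
      rw [← List.cons_append, ih (List.cons_ne_nil b u), mul_assoc]

lemma entry_le_one (hnn : ∀ i j, 0 ≤ P i j) (hrow : ∀ i, ∑ j, P i j = 1) (i j : Fin N) :
    P i j ≤ 1 :=
  hrow i ▸ Finset.single_le_sum (fun k _ => hnn i k) (Finset.mem_univ j)

lemma pword_nonneg (hnn : ∀ i j, 0 ≤ P i j) : ∀ l : List (Fin N), 0 ≤ pword P l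
  | [] | [_] => zero_le_one
  | _ :: b :: l => mul_nonneg (hnn _ _) (pword_nonneg hnn (b :: l))

lemma pword_le_one (hnn : ∀ i j, 0 ≤ P i j) (hrow : ∀ i, ∑ j, P i j = 1) :
    ∀ l : List (Fin N), pword P l ≤ 1
  | [] | [_] => le_rfl
  | _ :: b :: l => mul_le_one₀ (entry_le_one hnn hrow _ _) (pword_nonneg hnn _)
      (pword_le_one hnn hrow (b :: l))

lemma pword_append_le (hnn : ∀ i j, 0 ≤ P i j) (hrow : ∀ i, ∑ j, P i j = 1)
    (u v : List (Fin N)) : pword P (u ++ v) ≤ pword P u := by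
  rcases eq_or_ne u [] with rfl | hu
  · exact pword_le_one hnn hrow v
  · rw [pword_append hu]
    exact mul_le_of_le_one_right (pword_nonneg hnn u) (pword_le_one hnn hrow _)

lemma adm_of_pword_ne_zero (hnn : ∀ i j, 0 ≤ P i j) :
    ∀ {l : List (Fin N)}, l ≠ [] → pword P l ≠ 0 → adm P l
  | [a], _, _ => ⟨List.cons_ne_nil a [], List.isChain_singleton a⟩
  | a :: b :: l, _, h => by
    rw [pword_cons_cons, mul_ne_zero_iff] at h
    refine ⟨List.cons_ne_nil _ _, List.isChain_cons_cons.2 ⟨(hnn a b).lt_of_ne' h.1, ?_⟩⟩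
    exact (adm_of_pword_ne_zero hnn (List.cons_ne_nil b l) h.2).2

lemma pword_ofFn : ∀ {k : ℕ} (σ : Fin (k + 1) → Fin N), pword P (List.ofFn σ) = wprod P σ
  | 0, _ => by simp [wprod]
  | k + 1, σ => by
    rw [List.ofFn_succ, List.ofFn_succ, wprod, Fin.prod_univ_succ]
    simp only [pword_cons_cons]
    rw [← List.ofFn_succ (f := fun i : Fin (k + 1) => σ i.succ), pword_ofFn]
    rfl

variable (q : Fin N → ℝ)

lemma mlist_cons (a : Fin N) (l : List (Fin N)) :
    mlist q P (a :: l) = q a * pword P (a :: l) := rfl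

lemma mlist_append {σ : List (Fin N)} (hσ : σ ≠ []) (v : List (Fin N)) :
    mlist q P (σ ++ v) = mlist q P σ * pword P (σ.getLast hσ :: v) := by
  obtain ⟨a, σ, rfl⟩ := List.exists_cons_of_ne_nil hσ
  rw [List.cons_append, mlist_cons, mlist_cons, ← List.cons_append, pword_append hσ, mul_assoc]

lemma mlist_nonneg (hnn : ∀ i j, 0 ≤ P i j) (hq : ∀ i, 0 ≤ q i) :
    ∀ l : List (Fin N), 0 ≤ mlist q P l
  | [] => by simp only [mlist, List.map_nil, List.headI_nil, pword_nil, mul_one]; exact le_rfl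
  | a :: l => mul_nonneg (hq a) (pword_nonneg hnn _)

lemma mlist_ofFn {k : ℕ} (σ : Fin (k + 1) → Fin N) :
    mlist q P (List.ofFn σ) = q (σ 0) * wprod P σ := by
  rw [List.ofFn_succ, mlist_cons, ← List.ofFn_succ, pword_ofFn]

end PathWeight

section Entropy

variable {N : ℕ} {P : Matrix (Fin N) (Fin N) ℝ} (q : Fin N → ℝ)

lemma sum_words_pword_cons (hrow : ∀ i, ∑ j, P i j = 1) (i : Fin N) (n : ℕ) :
    ∑ v ∈ words (Fin N) n, pword P (i :: v) = 1 := by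
  induction n generalizing i with
  | zero => simp [sum_words_zero]
  | succ n ih => simp only [sum_words_succ, pword_cons_cons, ← Finset.mul_sum, ih, mul_one, hrow]

lemma xi_eq_sum_words (i : Fin N) (n : ℕ) :
    xi P i n = ∑ v ∈ words (Fin N) n, pword P (i :: v) * Real.log (pword P (i :: v)) := by
  change ∑ τ ∈ _, wprod P τ * Real.log (wprod P τ) = _
  rw [Finset.sum_filter, sum_words, ← Fintype.sum_equiv (Fin.consEquiv fun _ => Fin N) _ _
    fun _ => rfl, Fintype.sum_prod_type, Finset.sum_comm]
  simp only [Fin.consEquiv, Equiv.coe_fn_mk, Fin.cons_zero, Finset.sum_ite_eq', Finset.mem_univ,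
    if_true, ← pword_ofFn, List.ofFn_cons]

lemma useq_eq_sum_words {k : ℕ} (hk : k ≠ 0) :
    useq q P k = ∑ l ∈ words (Fin N) k, mlist q P l * Real.log (mlist q P l) := by
  obtain ⟨n, rfl⟩ := Nat.exists_eq_succ_of_ne_zero hk
  simp only [useq, Nat.succ_sub_one, sum_words, mlist_ofFn]

lemma sum_words_mlist (hrow : ∀ i, ∑ j, P i j = 1) (hq1 : ∑ i, q i = 1) (n : ℕ) :
    ∑ l ∈ words (Fin N) (n + 1), mlist q P l = 1 := by
  simp only [sum_words_succ, mlist_cons, ← Finset.mul_sum, sum_words_pword_cons hrow, mul_one, hq1]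

lemma sum_words_mlist_append (hrow : ∀ i, ∑ j, P i j = 1) {σ : List (Fin N)} (hσ : σ ≠ [])
    (n : ℕ) : ∑ v ∈ words (Fin N) n, mlist q P (σ ++ v) = mlist q P σ := by
  simp only [mlist_append q hσ, ← Finset.mul_sum, sum_words_pword_cons hrow, mul_one]

lemma sum_words_mlist_append_mul_log (hrow : ∀ i, ∑ j, P i j = 1) {σ : List (Fin N)}
    (hσ : σ ≠ []) (n : ℕ) :
    ∑ v ∈ words (Fin N) n, mlist q P (σ ++ v) * Real.log (mlist q P (σ ++ v))
      = mlist q P σ * Real.log (mlist q P σ) + mlist q P σ * xi P (σ.getLast hσ) n := by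
  have hmul_log (x y : ℝ) :
      x * y * Real.log (x * y) = y * (x * Real.log x) + x * (y * Real.log y) := by
    have := Real.negMulLog_mul x y
    simp only [Real.negMulLog] at this
    linarith
  simp only [mlist_append q hσ, hmul_log, Finset.sum_add_distrib, ← Finset.sum_mul,
    ← Finset.mul_sum, sum_words_pword_cons hrow, one_mul, xi_eq_sum_words]

end Entropy

/-- The paper's `Λ_j` is `stoppingSet P (p̲ ^ j)`. -/
def stoppingSet {N : ℕ} (P : Matrix (Fin N) (Fin N) ℝ) (c : ℝ) : Set (List (Fin N)) :=
  {l | adm P l ∧ c ≤ pword P l.dropLast ∧ pword P l < c}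

section StoppingSet

variable {N : ℕ} {P : Matrix (Fin N) (Fin N) ℝ} {c : ℝ}

lemma eq_of_prefix_of_mem_stoppingSet (hnn : ∀ i j, 0 ≤ P i j) (hrow : ∀ i, ∑ j, P i j = 1)
    {σ σ' : List (Fin N)} (hσ : σ ∈ stoppingSet P c) (hσ' : σ' ∈ stoppingSet P c)
    (h : σ <+: σ') : σ = σ' := by
  obtain ⟨w, rfl⟩ := h
  rcases eq_or_ne w [] with rfl | hw
  · exact (List.append_nil σ).symm
  have hdrop := hσ'.2.1
  rw [List.dropLast_append_of_ne_nil hw] at hdrop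
  exact absurd (hdrop.trans (pword_append_le hnn hrow σ _)) hσ.2.2.not_ge

lemma exists_prefix_mem_stoppingSet (hc : c ≤ 1) :
    ∀ τ : List (Fin N), adm P τ → pword P τ < c → ∃ σ ∈ stoppingSet P c, σ <+: τ := by
  intro τ
  induction τ using List.reverseRecOn with
  | nil => exact fun h => absurd rfl h.1
  | append_singleton u a ih =>
    intro hadm hlt
    by_cases hu : c ≤ pword P u
    · exact ⟨u ++ [a], ⟨hadm, by rwa [List.dropLast_concat], hlt⟩, List.prefix_refl _⟩
    have hu_ne : u ≠ [] := by
      rintro rfl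
      exact hu (by simpa using hc)
    obtain ⟨σ, hσ, hσu⟩ := ih ⟨hu_ne, hadm.2.left_of_append⟩ (not_le.1 hu)
    exact ⟨σ, hσ, hσu.trans (List.prefix_append u [a])⟩

lemma existsUnique_prefix_mem_stoppingSet (hnn : ∀ i j, 0 ≤ P i j)
    (hrow : ∀ i, ∑ j, P i j = 1) (hc : c ≤ 1) {τ : List (Fin N)} (hτ : adm P τ)
    (hlt : pword P τ < c) : ∃! σ, σ ∈ stoppingSet P c ∧ σ <+: τ := by
  obtain ⟨σ, hσ, hστ⟩ := exists_prefix_mem_stoppingSet hc τ hτ hlt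
  refine ⟨σ, ⟨hσ, hστ⟩, fun σ' ⟨hσ', hσ'τ⟩ => ?_⟩
  rcases List.prefix_or_prefix_of_prefix hσ'τ hστ with h | h
  · exact eq_of_prefix_of_mem_stoppingSet hnn hrow hσ' hσ h
  · exact (eq_of_prefix_of_mem_stoppingSet hnn hrow hσ hσ' h).symm

lemma length_le_of_mem_stoppingSet {M : ℕ} (hdecay : ∀ l, M ≤ l.length → pword P l < c)
    {σ : List (Fin N)} (hσ : σ ∈ stoppingSet P c) : σ.length ≤ M := by
  have h := mt (hdecay σ.dropLast) hσ.2.1.not_gt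
  rw [List.length_dropLast] at h
  omega

lemma stoppingSet_finite {M : ℕ} (hdecay : ∀ l, M ≤ l.length → pword P l < c) :
    (stoppingSet P c).Finite :=
  (List.finite_length_le (Fin N) M).subset fun _ hσ => length_le_of_mem_stoppingSet hdecay hσ

end StoppingSet

lemma exists_mem_rel_of_isChain_append_singleton {α : Type*} {R : α → α → Prop} {w : α} :
    ∀ {u : List α}, (u ++ [w]).IsChain R → ∀ y ∈ u, ∃ z ∈ u ++ [w], R y z
  | a :: u, h, y, hy => by
    obtain ⟨b, r, hbr⟩ := List.exists_cons_of_ne_nil (List.append_ne_nil_of_right_ne_nil u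
      (List.cons_ne_nil w []))
    rw [List.cons_append, hbr] at h ⊢
    rcases List.mem_cons.1 hy with rfl | hy
    · exact ⟨b, List.mem_cons_of_mem _ List.mem_cons_self, (List.isChain_cons_cons.1 h).1⟩
    · obtain ⟨z, hz, hyz⟩ := exists_mem_rel_of_isChain_append_singleton (hbr ▸ h.tail) y hy
      exact ⟨z, List.mem_cons_of_mem _ (hbr ▸ hz), hyz⟩

lemma exists_nonneg_lt_one_bound {ι : Type*} [Fintype ι] (f : ι → ℝ) :
    ∃ θ, 0 ≤ θ ∧ θ < 1 ∧ ∀ i, f i < 1 → f i ≤ θ := by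
  classical
  set s := insert 0 ((Finset.univ.filter fun i => f i < 1).image f)
  have hs : s.Nonempty := Finset.insert_nonempty _ _
  refine ⟨s.max' hs, s.le_max' 0 (Finset.mem_insert_self _ _), ?_, fun i hi => s.le_max' _ ?_⟩
  · obtain h | h := Finset.mem_insert.1 (s.max'_mem hs)
    · rw [h]; exact zero_lt_one
    · obtain ⟨i, hi, hi'⟩ := Finset.mem_image.1 h
      exact hi' ▸ (Finset.mem_filter.1 hi).2
  · exact Finset.mem_insert_of_mem (Finset.mem_image_of_mem f (by simpa using hi))

section Decay

variable {N : ℕ} {P : Matrix (Fin N) (Fin N) ℝ}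

lemma eq_one_of_pos_of_closed (hnn : ∀ i j, 0 ≤ P i j) (hrow : ∀ i, ∑ j, P i j = 1)
    (hirr : ∀ i j, ∃ m, 1 ≤ m ∧ 0 < (P ^ m) i j) {C : Set (Fin N)} {c : Fin N} (hc : c ∈ C)
    (hC : ∀ a ∈ C, ∃ b ∈ C, P a b = 1) {a b : Fin N} (hab : 0 < P a b) : P a b = 1 := by
  have eq_of_eq_one {a b x : Fin N} (hb : P a b = 1) (hx : 0 < P a x) : x = b := by
    by_contra hne
    have := Finset.add_le_sum (fun j _ => hnn a j) (Finset.mem_univ b) (Finset.mem_univ x)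
      (Ne.symm hne)
    linarith [hrow a]
  have closed {a x : Fin N} (ha : a ∈ C) (hx : 0 < P a x) : x ∈ C := by
    obtain ⟨b, hb, hab⟩ := hC a ha
    exact eq_of_eq_one hab hx ▸ hb
  have closed_pow (m : ℕ) {x : Fin N} (hx : 0 < (P ^ m) c x) : x ∈ C := by
    induction m generalizing x with
    | zero =>
      obtain rfl : c = x := by by_contra h; simp [h] at hx
      exact hc
    | succ m ih =>
      rw [pow_succ, Matrix.mul_apply] at hx
      obtain ⟨y, -, hy⟩ := Finset.exists_lt_of_sum_lt (f := fun _ => (0 : ℝ)) (by simpa using hx)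
      rcases pos_and_pos_or_neg_and_neg_of_mul_pos hy with h | h
      · exact closed (ih h.1) h.2
      · exact absurd (hnn y x) h.2.not_ge
  obtain ⟨m, -, hm⟩ := hirr c a
  obtain ⟨b', -, hb'⟩ := hC a (closed_pow m hm)
  exact eq_of_eq_one hb' hab ▸ hb'

lemma eq_one_of_pos_of_isChain (hnn : ∀ i j, 0 ≤ P i j) (hrow : ∀ i, ∑ j, P i j = 1)
    (hirr : ∀ i j, ∃ m, 1 ≤ m ∧ 0 < (P ^ m) i j) {l : List (Fin N)} (hl : N < l.length)
    (hchain : l.IsChain fun a b => P a b = 1) {a b : Fin N} (hab : 0 < P a b) : P a b = 1 := by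
  have hdup : ¬ l.Nodup := fun hnd => by simpa using hnd.length_le_card.trans_lt' hl
  obtain ⟨x, hx⟩ : ∃ x, List.Sublist [x, x] l := by simpa [List.nodup_iff_sublist] using hdup
  obtain ⟨r₁, r₂, rfl, hx₁, hx₂⟩ := List.cons_sublist_iff.1 hx
  obtain ⟨s, m, rfl⟩ := List.mem_iff_append.1 hx₁
  obtain ⟨m', t, rfl⟩ := List.mem_iff_append.1 (List.singleton_sublist.1 hx₂)
  have hcycle : (x :: (m ++ m') ++ [x]).IsChain fun a b => P a b = 1 :=
    hchain.infix ⟨s, t, by simp⟩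
  refine eq_one_of_pos_of_closed hnn hrow hirr (C := {y | y ∈ x :: (m ++ m')})
    List.mem_cons_self (fun y hy => ?_) hab
  obtain ⟨z, hz, hyz⟩ := exists_mem_rel_of_isChain_append_singleton hcycle y hy
  refine ⟨z, ?_, hyz⟩
  simp only [List.cons_append, List.mem_cons, List.mem_append] at hz
  show z ∈ x :: (m ++ m')
  simp only [List.mem_cons, List.mem_append]
  tauto

lemma isChain_eq_one_of_lt_pword (hnn : ∀ i j, 0 ≤ P i j) (hrow : ∀ i, ∑ j, P i j = 1)
    {θ : ℝ} (hθ : ∀ a b, P a b < 1 → P a b ≤ θ) :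
    ∀ l : List (Fin N), θ < pword P l → l.IsChain fun a b => P a b = 1
  | [], _ => List.IsChain.nil
  | [a], _ => List.isChain_singleton a
  | a :: b :: l, h => by
    rw [pword_cons_cons] at h
    have hab : θ < P a b :=
      h.trans_le (mul_le_of_le_one_right (hnn a b) (pword_le_one hnn hrow _))
    have hbl : θ < pword P (b :: l) :=
      h.trans_le (mul_le_of_le_one_left (pword_nonneg hnn _) (entry_le_one hnn hrow a b))
    refine List.isChain_cons_cons.2 ⟨?_, isChain_eq_one_of_lt_pword hnn hrow hθ _ hbl⟩
    exact (entry_le_one hnn hrow a b).antisymm (not_lt.1 fun h1 => (hθ a b h1).not_gt hab)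

lemma pword_le_of_lt_length (hnn : ∀ i j, 0 ≤ P i j) (hrow : ∀ i, ∑ j, P i j = 1)
    (hirr : ∀ i j, ∃ m, 1 ≤ m ∧ 0 < (P ^ m) i j) (hB : ∃ a b, 0 < P a b ∧ P a b < 1)
    {θ : ℝ} (hθ : ∀ a b, P a b < 1 → P a b ≤ θ) {l : List (Fin N)} (hl : N < l.length) :
    pword P l ≤ θ := by
  by_contra h
  obtain ⟨a, b, hab, hab1⟩ := hB
  exact hab1.ne (eq_one_of_pos_of_isChain hnn hrow hirr hl
    (isChain_eq_one_of_lt_pword hnn hrow hθ l (not_le.1 h)) hab)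

lemma pword_le_pow (hnn : ∀ i j, 0 ≤ P i j) (hrow : ∀ i, ∑ j, P i j = 1) {θ : ℝ}
    (hθ : 0 ≤ θ) {W : ℕ} (hW : 0 < W) (hwindow : ∀ l : List (Fin N), W ≤ l.length → pword P l ≤ θ) :
    ∀ (d : ℕ) (l : List (Fin N)), d * W ≤ l.length → pword P l ≤ θ ^ d
  | 0, l, _ => by simpa using pword_le_one hnn hrow l
  | d + 1, l, hl => by
    have hlen : W ≤ l.length := le_trans (by nlinarith) hl
    have hu : l.take W ≠ [] := List.ne_nil_of_length_pos (by simp; omega)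
    rw [← List.take_append_drop W l, pword_append hu, pow_succ']
    refine mul_le_mul (hwindow _ ?_) (pword_le_pow hnn hrow hθ hW hwindow d _ ?_)
      (pword_nonneg hnn _) hθ
    · simp [hlen]
    · simp only [List.length_cons, List.length_drop]
      rw [add_mul, one_mul] at hl
      omega

lemma exists_pword_lt (hnn : ∀ i j, 0 ≤ P i j) (hrow : ∀ i, ∑ j, P i j = 1)
    (hirr : ∀ i j, ∃ m, 1 ≤ m ∧ 0 < (P ^ m) i j) (hB : ∃ a b, 0 < P a b ∧ P a b < 1)
    {c : ℝ} (hc : 0 < c) : ∃ M, ∀ l : List (Fin N), M ≤ l.length → pword P l < c := by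
  obtain ⟨θ, hθ0, hθ1, hθ⟩ := exists_nonneg_lt_one_bound fun ab : Fin N × Fin N => P ab.1 ab.2
  obtain ⟨d, hd⟩ := exists_pow_lt_of_lt_one hc hθ1
  refine ⟨d * (N + 1), fun l hl => (pword_le_pow hnn hrow hθ0 N.succ_pos ?_ d l hl).trans_lt hd⟩
  exact fun l hl => pword_le_of_lt_length hnn hrow hirr hB (fun a b => hθ (a, b)) hl

end Decay

section CompleteSection

variable {N : ℕ} {P : Matrix (Fin N) (Fin N) ℝ} (q : Fin N → ℝ)

lemma abs_sum_words_entropy_gain_sub_xi_le (hnn : ∀ i j, 0 ≤ P i j)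
    (hrow : ∀ i, ∑ j, P i j = 1) (hq : ∀ i, 0 ≤ q i) (hq1 : ∑ i, q i = 1) {n : ℕ} {C : ℝ}
    (hC : ∀ i j, |xi P i n - xi P j n| ≤ C) {k : ℕ} (hk : k ≠ 0) (i : Fin N) :
    |∑ ρ ∈ words (Fin N) k, (∑ v ∈ words (Fin N) n,
        mlist q P (ρ ++ v) * Real.log (mlist q P (ρ ++ v)) - mlist q P ρ * Real.log (mlist q P ρ))
      - xi P i n| ≤ C := by
  obtain ⟨k, rfl⟩ := Nat.exists_eq_add_one_of_ne_zero hk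
  have hterm : ∀ ρ ∈ words (Fin N) (k + 1),
      |(∑ v ∈ words (Fin N) n, mlist q P (ρ ++ v) * Real.log (mlist q P (ρ ++ v))
        - mlist q P ρ * Real.log (mlist q P ρ)) - mlist q P ρ * xi P i n| ≤ mlist q P ρ * C := by
    intro ρ hρ
    have hρ : ρ ≠ [] := List.ne_nil_of_length_pos (by simp at hρ; omega)
    have hm := mlist_nonneg q hnn hq ρ
    rw [sum_words_mlist_append_mul_log q hrow hρ, add_sub_cancel_left, ← mul_sub, abs_mul,
      abs_of_nonneg hm]
    exact mul_le_mul_of_nonneg_left (hC _ _) hm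
  calc _ = |∑ ρ ∈ words (Fin N) (k + 1),
        ((∑ v ∈ words (Fin N) n, mlist q P (ρ ++ v) * Real.log (mlist q P (ρ ++ v))
          - mlist q P ρ * Real.log (mlist q P ρ)) - mlist q P ρ * xi P i n)| := by
        rw [Finset.sum_sub_distrib (g := fun ρ => mlist q P ρ * xi P i n), ← Finset.sum_mul,
          sum_words_mlist q hrow hq1, one_mul]
    _ ≤ ∑ ρ ∈ words (Fin N) (k + 1), mlist q P ρ * C :=
        (Finset.abs_sum_le_sum_abs _ _).trans (Finset.sum_le_sum hterm)
    _ = C := by rw [← Finset.sum_mul, sum_words_mlist q hrow hq1, one_mul]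

lemma abs_mlist_mul_log_sub_useq_sub_le (hnn : ∀ i j, 0 ≤ P i j)
    (hrow : ∀ i, ∑ j, P i j = 1) (hq : ∀ i, 0 ≤ q i) (hq1 : ∑ i, q i = 1) {n : ℕ} {C : ℝ}
    (hC : ∀ i j, |xi P i n - xi P j n| ≤ C) {σ : List (Fin N)} (hσ : σ ≠ []) :
    |mlist q P σ * (Real.log (mlist q P σ) - useq q P σ.length)
      - (∑ v ∈ words (Fin N) n, mlist q P (σ ++ v) * Real.log (mlist q P (σ ++ v))
        - mlist q P σ * ∑ τ ∈ words (Fin N) (σ.length + n),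
          mlist q P τ * Real.log (mlist q P τ))| ≤ mlist q P σ * C := by
  have hk : σ.length ≠ 0 := List.length_pos_of_ne_nil hσ |>.ne'
  have hm := mlist_nonneg q hnn hq σ
  set A := ∑ ρ ∈ words (Fin N) σ.length, (∑ v ∈ words (Fin N) n,
    mlist q P (ρ ++ v) * Real.log (mlist q P (ρ ++ v)) - mlist q P ρ * Real.log (mlist q P ρ))
  have hU : ∑ τ ∈ words (Fin N) (σ.length + n), mlist q P τ * Real.log (mlist q P τ)
      = useq q P σ.length + A := by
    rw [sum_words_add, useq_eq_sum_words q hk, ← Finset.sum_add_distrib]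
    simp only [add_sub_cancel]
  rw [sum_words_mlist_append_mul_log q hrow hσ, hU]
  calc _ = mlist q P σ * |A - xi P (σ.getLast hσ) n| := by
        rw [← abs_of_nonneg hm, ← abs_mul, abs_of_nonneg hm]
        congr 1
        ring
    _ ≤ mlist q P σ * C := mul_le_mul_of_nonneg_left
        (abs_sum_words_entropy_gain_sub_xi_le q hnn hrow hq hq1 hC hk _) hm

theorem abs_sum_mlist_mul_log_sub_useq_le (hnn : ∀ i j, 0 ≤ P i j) (hrow : ∀ i, ∑ j, P i j = 1)
    (hq : ∀ i, 0 ≤ q i) (hq1 : ∑ i, q i = 1) {C : ℝ}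
    (hC : ∀ n : ℕ, 1 ≤ n → ∀ i j : Fin N, |xi P i n - xi P j n| ≤ C)
    (Λ : Finset (List (Fin N))) {K : ℕ} (hK : 0 < K) (hΛ : ∀ σ ∈ Λ, σ ≠ [] ∧ σ.length < K)
    (hsec : ∀ τ ∈ words (Fin N) K, mlist q P τ ≠ 0 → ∃! σ, σ ∈ Λ ∧ σ <+: τ) :
    |∑ σ ∈ Λ, mlist q P σ * (Real.log (mlist q P σ) - useq q P σ.length)| ≤ C := by
  have hlen : ∀ σ ∈ Λ, σ.length ≤ K := fun σ hσ => (hΛ σ hσ).2.le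
  set U := ∑ τ ∈ words (Fin N) K, mlist q P τ * Real.log (mlist q P τ)
  have hmass : ∑ σ ∈ Λ, mlist q P σ = 1 := by
    rw [← sum_words_mlist q hrow hq1 (K - 1), Nat.sub_add_cancel hK,
      sum_words_eq_sum_prefix Λ K _ hlen hsec]
    exact Finset.sum_congr rfl fun σ hσ => (sum_words_mlist_append q hrow (hΛ σ hσ).1 _).symm
  have hU : ∑ σ ∈ Λ, ∑ v ∈ words (Fin N) (K - σ.length),
      mlist q P (σ ++ v) * Real.log (mlist q P (σ ++ v)) = U :=
    (sum_words_eq_sum_prefix Λ K (fun τ => mlist q P τ * Real.log (mlist q P τ)) hlen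
      fun τ hτ h => hsec τ hτ (left_ne_zero_of_mul h)).symm
  have hterm : ∀ σ ∈ Λ, |mlist q P σ * (Real.log (mlist q P σ) - useq q P σ.length)
      - (∑ v ∈ words (Fin N) (K - σ.length), mlist q P (σ ++ v) * Real.log (mlist q P (σ ++ v))
        - mlist q P σ * U)| ≤ mlist q P σ * C := by
    intro σ hσ
    have hK' : σ.length + (K - σ.length) = K := by have := (hΛ σ hσ).2; omega
    have := abs_mlist_mul_log_sub_useq_sub_le q hnn hrow hq hq1
      (hC (K - σ.length) (by have := (hΛ σ hσ).2; omega)) (hΛ σ hσ).1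
    rwa [hK'] at this
  calc _ = |∑ σ ∈ Λ, (mlist q P σ * (Real.log (mlist q P σ) - useq q P σ.length)
        - (∑ v ∈ words (Fin N) (K - σ.length), mlist q P (σ ++ v) * Real.log (mlist q P (σ ++ v))
          - mlist q P σ * U))| := by
        rw [Finset.sum_sub_distrib _ (fun σ => _ - _), Finset.sum_sub_distrib, hU,
          ← Finset.sum_mul, hmass, one_mul, sub_self, sub_zero]
    _ ≤ ∑ σ ∈ Λ, mlist q P σ * C :=
        (Finset.abs_sum_le_sum_abs _ _).trans (Finset.sum_le_sum hterm)
    _ = C := by rw [← Finset.sum_mul, hmass, one_mul]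

end CompleteSection

section Threshold

variable {N : ℕ} {P : Matrix (Fin N) (Fin N) ℝ}

lemma sInf_pos_entries_mem (hrow : ∀ i, ∑ j, P i j = 1) (i : Fin N) :
    sInf {x | ∃ i j, 0 < P i j ∧ P i j = x} ∈ {x | ∃ i j, 0 < P i j ∧ P i j = x} := by
  refine Set.Nonempty.csInf_mem ?_ ((Set.finite_range fun ab : Fin N × Fin N => P ab.1 ab.2).subset
    (by rintro _ ⟨a, b, -, rfl⟩; exact ⟨(a, b), rfl⟩))
  obtain ⟨j, -, hj⟩ := Finset.exists_lt_of_sum_lt (f := fun _ => (0 : ℝ)) (g := P i)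
    (s := Finset.univ) (by simp [hrow i])
  exact ⟨P i j, i, j, hj, rfl⟩

lemma pword_eq_one_of_isChain (hone : ∀ a b, 0 < P a b → P a b = 1) :
    ∀ l : List (Fin N), l.IsChain (fun a b => 0 < P a b) → pword P l = 1
  | [], _ => rfl
  | [_], _ => rfl
  | a :: b :: l, h => by
    rw [List.isChain_cons_cons] at h
    rw [pword_cons_cons, hone a b h.1, one_mul, pword_eq_one_of_isChain hone _ h.2]

lemma stoppingSet_eq_empty (hnn : ∀ i j, 0 ≤ P i j) (hrow : ∀ i, ∑ j, P i j = 1)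
    (hB : ¬∃ a b, 0 < P a b ∧ P a b < 1) {c : ℝ} (hc : c ≤ 1) : stoppingSet P c = ∅ := by
  simp only [not_exists, not_and, not_lt] at hB
  have hone : ∀ a b, 0 < P a b → P a b = 1 :=
    fun a b h => (entry_le_one hnn hrow a b).antisymm (hB a b h)
  refine Set.eq_empty_of_forall_notMem fun l hl => ?_
  obtain ⟨hadm, -, hlt⟩ := hl
  rw [pword_eq_one_of_isChain hone l hadm.2] at hlt
  exact hlt.not_ge hc

end Threshold

theorem stmt7 {N : ℕ} (P : Matrix (Fin N) (Fin N) ℝ)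
    (hnn : ∀ i j, 0 ≤ P i j) (hrow : ∀ i, ∑ j, P i j = 1)
    (hirr : ∀ i j, ∃ m, 1 ≤ m ∧ 0 < (P ^ m) i j)
    (q : Fin N → ℝ) (hq : ∀ i, 0 < q i) (hq1 : ∑ i, q i = 1)
    (pmin : ℝ) (hpmin : pmin = sInf {x : ℝ | ∃ i j, 0 < P i j ∧ P i j = x})
    (Λ : ℕ → Set (List (Fin N)))
    (hΛ : ∀ j, Λ j = {l | adm P l ∧
      pmin ^ j ≤ pword P l.dropLast ∧ pword P l < pmin ^ j})
    (C1 : ℝ)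
    (hC1 : ∀ n : ℕ, 1 ≤ n → ∀ i j : Fin N, |xi P i n - xi P j n| ≤ C1) :
    ∀ j : ℕ, 1 ≤ j →
      |∑ᶠ σ ∈ Λ j, mlist q P σ * (Real.log (mlist q P σ) - useq q P σ.length)| ≤ C1 := by
  intro j _
  obtain ⟨i₀⟩ : Nonempty (Fin N) :=
    Fin.pos_iff_nonempty.1 (Nat.pos_of_ne_zero (by rintro rfl; simp at hq1))
  obtain ⟨a₀, b₀, hpos, rfl⟩ := hpmin ▸ sInf_pos_entries_mem hrow i₀
  have hc : 0 < P a₀ b₀ ^ j := pow_pos hpos j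
  have hc1 : P a₀ b₀ ^ j ≤ 1 := pow_le_one₀ (hnn a₀ b₀) (entry_le_one hnn hrow a₀ b₀)
  rw [show Λ j = stoppingSet P (P a₀ b₀ ^ j) from hΛ j]
  by_cases hB : ∃ a b, 0 < P a b ∧ P a b < 1
  · obtain ⟨M, hM⟩ := exists_pword_lt hnn hrow hirr hB hc
    have hfin := stoppingSet_finite hM
    rw [finsum_mem_eq_finite_toFinset_sum _ hfin]
    refine abs_sum_mlist_mul_log_sub_useq_le q hnn hrow (fun i => (hq i).le) hq1 hC1 _ M.succ_pos
      (fun σ hσ => ?_) (fun τ hτ hτ0 => ?_)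
    · rw [Set.Finite.mem_toFinset] at hσ
      exact ⟨hσ.1.1, Nat.lt_succ_of_le (length_le_of_mem_stoppingSet hM hσ)⟩
    · rw [mem_words] at hτ
      have hadm := adm_of_pword_ne_zero hnn (List.ne_nil_of_length_pos (by omega))
        (right_ne_zero_of_mul hτ0)
      simpa using existsUnique_prefix_mem_stoppingSet hnn hrow hc1 hadm (hM τ (by omega))
  · rw [stoppingSet_eq_empty hnn hrow hB hc1, finsum_mem_empty, abs_zero]
    simpa using hC1 1 le_rfl i₀ i₀
end

section
/- Suppose for each j the quantities ê_{ψ_j}(μ) satisfy Σ_{σ∈Λ_j} m_σ log c_σ + C_0 ≤ ê_{ψ_j}(μ) ≤ Σ_{σ∈Λ_j} m_σ log c_σ, and the ratios t_j := (Σ_{Λ_j} m_σ log m_σ)/(Σ_{Λ_j} m_σ log c_σ) satisfy |t_j − s_0| ≤ C_4/j with s_0 > 0. Assume also p̲^{j+1} ≤ p_σ < p̲^j for σ ∈ Λ_j, q̄^{-1}p̲^{-j} ≤ ψ_j ≤ q̲^{-1}p̲^{-(j+1)}, and m_σ = q_{σ_1}p_σ with q̲ ≤ q_{σ_1} ≤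 q̄. Then Q_{ψ_j}(μ, s_0) := s_0^{-1} log ψ_j + ê_{ψ_j}(μ) is bounded above and below uniformly in j, i.e., 0 < liminf_j ψ_j^{1/s_0} e_{ψ_j,0}(μ) ≤ limsup_j ψ_j^{1/s_0} e_{ψ_j,0}(μ) < ∞. -/
open MeasureTheory Filter

/-- The `n`-th geometric mean quantization error. -/
noncomputable def geErr {E : Type*} [NormedAddCommGroup E] [MeasurableSpace E]
    (n : ℕ) (μ : Measure E) : ℝ :=
  sInf ((fun α : Finset E => Real.exp (∫ x, Real.log (Metric.infDist x ↑α) ∂μ)) ''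
    {α : Finset E | α.Nonempty ∧ α.card ≤ n})

/-!
Write `a_j = log q̲ + (j + 1) log p̲` and `b_j = log q̄ + j log p̲`. Every `log m_σ` with
`σ ∈ Λ_j` lies in `[a_j, b_j]`, hence so does the average `M_j = ∑ m_σ log m_σ`, and so does
`-log ψ_j`. Thus `log ψ_j + M_j = O(1)` while `M_j = O(j)`. Since `∑ m_σ log c_σ = M_j / t_j` and
`|t_j - s₀| ≤ C₄ / j`, the error `M_j / t_j - M_j / s₀` is `O(j · 1/j) = O(1)`, so
`s₀⁻¹ log ψ_j + ∑ m_σ log c_σ = O(1)`, and the sandwich on `log e_{ψ_j}` transfers this bound to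
`s₀⁻¹ log ψ_j + log e_{ψ_j}`.
-/

open Real Set

lemma geErr_nonneg {E : Type*} [NormedAddCommGroup E] [MeasurableSpace E] (n : ℕ)
    (μ : Measure E) : 0 ≤ geErr n μ :=
  Real.sInf_nonneg (by rintro _ ⟨α, -, rfl⟩; exact (exp_pos _).le)

lemma geErr_pos_of_log_neg {E : Type*} [NormedAddCommGroup E] [MeasurableSpace E] {n : ℕ}
    {μ : Measure E} (h : log (geErr n μ) < 0) : 0 < geErr n μ :=
  (geErr_nonneg n μ).lt_of_ne fun h0 => by rw [← h0, log_zero] at h; exact lt_irrefl 0 h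

lemma Finset.sum_mul_mem_Icc_of_sum_eq_one {ι : Type*} {s : Finset ι} {w g : ι → ℝ} {a b : ℝ}
    (hw : ∀ i ∈ s, 0 ≤ w i) (hw1 : ∑ i ∈ s, w i = 1) (hg : ∀ i ∈ s, g i ∈ Set.Icc a b) :
    ∑ i ∈ s, w i * g i ∈ Set.Icc a b := by
  constructor
  · calc a = ∑ i ∈ s, w i * a := by rw [← Finset.sum_mul, hw1, one_mul]
      _ ≤ ∑ i ∈ s, w i * g i :=
        Finset.sum_le_sum fun i hi => mul_le_mul_of_nonneg_left (hg i hi).1 (hw i hi)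
  · calc ∑ i ∈ s, w i * g i ≤ ∑ i ∈ s, w i * b :=
        Finset.sum_le_sum fun i hi => mul_le_mul_of_nonneg_left (hg i hi).2 (hw i hi)
      _ = b := by rw [← Finset.sum_mul, hw1, one_mul]

section Levels

variable {q p x qmin qmax pmin : ℝ} {j : ℕ}

lemma log_mul_mem_Icc_of_pow_bounds (hqmin : 0 < qmin) (hpmin : 0 < pmin)
    (hq : qmin ≤ q ∧ q ≤ qmax) (hp : pmin ^ (j + 1) ≤ p ∧ p < pmin ^ j) :
    log (q * p) ∈ Icc (log qmin + (j + 1) * log pmin) (log qmax + j * log pmin) := by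
  have hq0 : 0 < q := hqmin.trans_le hq.1
  have hp0 : 0 < p := (pow_pos hpmin _).trans_le hp.1
  have hlp := log_le_log (pow_pos hpmin _) hp.1
  have hup := log_le_log hp0 hp.2.le
  rw [log_pow] at hlp hup
  push_cast at hlp
  rw [log_mul hq0.ne' hp0.ne']
  exact ⟨by linarith [log_le_log hqmin hq.1], by linarith [log_le_log hq0 hq.2]⟩

lemma neg_log_mem_Icc_of_inv_pow_bounds (hqmin : 0 < qmin) (hqmax : 0 < qmax)
    (hpmin : 0 < pmin)
    (hx : qmax⁻¹ * (pmin ^ j)⁻¹ ≤ x ∧ x ≤ qmin⁻¹ * (pmin ^ (j + 1))⁻¹) :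
    -log x ∈ Icc (log qmin + (j + 1) * log pmin) (log qmax + j * log pmin) := by
  have hlo := log_le_log (by positivity) hx.1
  have hhi := log_le_log ((by positivity : (0 : ℝ) < _).trans_le hx.1) hx.2
  rw [log_mul (by positivity) (by positivity), log_inv, log_inv, log_pow] at hlo hhi
  push_cast at hhi
  exact ⟨by linarith, by linarith⟩

lemma sum_mul_log_mem_Icc_of_pow_bounds {ι : Type*} {s : Finset ι} {m qh pw : ι → ℝ}
    (hqmin : 0 < qmin) (hpmin : 0 < pmin) (hm : ∀ σ, m σ = qh σ * pw σ)
    (hqh : ∀ σ, qmin ≤ qh σ ∧ qh σ ≤ qmax)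
    (hp : ∀ σ ∈ s, pmin ^ (j + 1) ≤ pw σ ∧ pw σ < pmin ^ j) (hm1 : ∑ σ ∈ s, m σ = 1) :
    ∑ σ ∈ s, m σ * log (m σ) ∈
      Icc (log qmin + (j + 1) * log pmin) (log qmax + j * log pmin) := by
  refine Finset.sum_mul_mem_Icc_of_sum_eq_one (fun σ hσ => ?_) hm1 fun σ hσ => ?_
  · rw [hm σ]
    exact mul_nonneg (hqmin.trans_le (hqh σ).1).le ((pow_pos hpmin _).trans_le (hp σ hσ).1).le
  · rw [hm σ]
    exact log_mul_mem_Icc_of_pow_bounds hqmin hpmin (hqh σ) (hp σ hσ)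

end Levels

lemma abs_mul_abs_sub_le_of_mem_Icc {M lq lQ L t s0 C4 : ℝ} {j : ℕ} (hj : 1 ≤ j)
    (hlq : lq < 0) (hlQ : lQ < 0) (hL : L < 0) (hM : M ∈ Icc (lq + (j + 1) * L) (lQ + j * L))
    (ht : |t - s0| ≤ C4 / j) :
    |M| * |t - s0| ≤ (-lq - 2 * L) * C4 := by
  have hj' : (1 : ℝ) ≤ j := by exact_mod_cast hj
  have hMj : |M| ≤ j * (-lq - 2 * L) := by
    rw [abs_of_neg (by nlinarith [hM.2])]
    nlinarith [hM.1]
  calc |M| * |t - s0| ≤ (j * (-lq - 2 * L)) * (C4 / j) :=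
        mul_le_mul hMj ht (abs_nonneg _) (by nlinarith)
    _ = (-lq - 2 * L) * C4 := by field_simp

lemma abs_div_add_div_le {y M t s0 D P : ℝ} (hs0 : 0 < s0) (ht : s0 / 2 ≤ t)
    (hyM : |y + M| ≤ D) (hMt : |M| * |t - s0| ≤ P) :
    |y / s0 + M / t| ≤ D / s0 + 2 * P / s0 ^ 2 := by
  have ht0 : 0 < t := by linarith
  have hsplit : y / s0 + M / t = (y + M) / s0 + M * (s0 - t) / (t * s0) := by
    field_simp; ring
  have hts : s0 ^ 2 / 2 ≤ t * s0 := by nlinarith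
  have herr : |M * (s0 - t) / (t * s0)| ≤ 2 * P / s0 ^ 2 := by
    rw [abs_div, abs_mul, abs_sub_comm s0 t, abs_of_pos (mul_pos ht0 hs0)]
    calc |M| * |t - s0| / (t * s0) ≤ P / (s0 ^ 2 / 2) :=
          div_le_div₀ ((mul_nonneg (abs_nonneg _) (abs_nonneg _)).trans hMt) hMt (by positivity) hts
      _ = 2 * P / s0 ^ 2 := by field_simp
  calc |y / s0 + M / t| ≤ |(y + M) / s0| + |M * (s0 - t) / (t * s0)| :=
        hsplit ▸ abs_add_le _ _
    _ ≤ D / s0 + 2 * P / s0 ^ 2 := by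
        rw [abs_div, abs_of_pos hs0]
        gcongr

lemma abs_log_div_add_le_of_mem_Icc {x M S t s0 C4 lq lQ L : ℝ} {j : ℕ} (hj : 1 ≤ j)
    (hlq : lq < 0) (hlQ : lQ < 0) (hL : L < 0) (hs0 : 0 < s0)
    (hM : M ∈ Icc (lq + (j + 1) * L) (lQ + j * L))
    (hx : -log x ∈ Icc (lq + (j + 1) * L) (lQ + j * L))
    (ht : t = M / S) (htj : |t - s0| ≤ C4 / j) (hC4j : C4 / j ≤ s0 / 2) :
    S < 0 ∧ |log x / s0 + S| ≤ (lQ - lq - L) / s0 + 2 * ((-lq - 2 * L) * C4) / s0 ^ 2 := by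
  have ht_half : s0 / 2 ≤ t := by linarith [(abs_le.1 htj).1]
  have hS : S = M / t := by
    have hS0 : S ≠ 0 := fun h => by rw [ht, h, div_zero] at ht_half; linarith
    rw [eq_div_iff (by linarith), ht]
    field_simp
  have hM_neg : M < 0 := by nlinarith [hM.2, mul_nonpos_of_nonneg_of_nonpos j.cast_nonneg hL.le]
  refine ⟨hS ▸ div_neg_of_neg_of_pos hM_neg (by linarith), hS ▸ abs_div_add_div_le hs0 ht_half
    (abs_le.2 ⟨by linarith [hM.1, hx.2], by linarith [hM.2, hx.1]⟩)
    (abs_mul_abs_sub_le_of_mem_Icc hj hlq hlQ hL hM htj)⟩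

lemma rpow_one_div_mul_mem_Icc {x e S C0 s0 K : ℝ} (hx : 0 < x) (he : 0 < e)
    (hlo : S + C0 ≤ log e) (hhi : log e ≤ S) (hQ : |log x / s0 + S| ≤ K) :
    x ^ (1 / s0) * e ∈ Icc (exp (-(K + |C0|))) (exp (K + |C0|)) := by
  rw [rpow_def_of_pos hx, ← exp_log he, ← exp_add]
  obtain ⟨hQlo, hQhi⟩ := abs_le.mp hQ
  have hx_div := mul_one_div (log x) s0
  exact ⟨exp_le_exp.2 (by linarith [neg_abs_le C0]), exp_le_exp.2 (by linarith [abs_nonneg C0])⟩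

lemma liminf_ofReal_pos_and_le_limsup_and_limsup_lt_top {α : Type*} {l : Filter α} [l.NeBot]
    {f : α → ℝ} {a b : ℝ} (ha : 0 < a) (hf : ∀ᶠ x in l, f x ∈ Icc a b) :
    0 < l.liminf (fun x => ENNReal.ofReal (f x)) ∧
      l.liminf (fun x => ENNReal.ofReal (f x)) ≤ l.limsup (fun x => ENNReal.ofReal (f x)) ∧
      l.limsup (fun x => ENNReal.ofReal (f x)) < ⊤ := by
  refine ⟨?_, liminf_le_limsup, ?_⟩
  · exact (ENNReal.ofReal_pos.2 ha).trans_le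
      (le_liminf_of_le (by isBoundedDefault) (hf.mono fun x hx => ENNReal.ofReal_le_ofReal hx.1))
  · exact (limsup_le_of_le (by isBoundedDefault)
      (hf.mono fun x hx => ENNReal.ofReal_le_ofReal hx.2)).trans_lt ENNReal.ofReal_lt_top

theorem stmt15_general {E ι : Type*} [NormedAddCommGroup E] [MeasurableSpace E]
    (μ : Measure E)
    (Λ : ℕ → Set ι) (hfin : ∀ j, (Λ j).Finite)
    (p c m qh : ι → ℝ)
    (pmin qmin qmax : ℝ)
    (hpmin : 0 < pmin ∧ pmin < 1) (hqmin : 0 < qmin ∧ qmin < 1)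
    (hqmax : 0 < qmax ∧ qmax < 1)
    (hm : ∀ σ, m σ = qh σ * p σ)
    (hqh : ∀ σ, qmin ≤ qh σ ∧ qh σ ≤ qmax)
    (hpΛ : ∀ j : ℕ, ∀ σ ∈ Λ j, pmin ^ (j + 1) ≤ p σ ∧ p σ < pmin ^ j)
    (hsum1 : ∀ j : ℕ, (∑ᶠ σ ∈ Λ j, m σ) = 1)
    (ψ : ℕ → ℕ)
    (hψ : ∀ j : ℕ, 1 ≤ j → qmax⁻¹ * (pmin ^ j)⁻¹ ≤ (ψ j : ℝ) ∧
      (ψ j : ℝ) ≤ qmin⁻¹ * (pmin ^ (j + 1))⁻¹)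
    (C0 C4 s0 : ℝ) (hs0 : 0 < s0) (J0 : ℕ)
    (hsand : ∀ j : ℕ, J0 ≤ j →
      (∑ᶠ σ ∈ Λ j, m σ * Real.log (c σ)) + C0 ≤ Real.log (geErr (ψ j) μ) ∧
      Real.log (geErr (ψ j) μ) ≤ ∑ᶠ σ ∈ Λ j, m σ * Real.log (c σ))
    (t : ℕ → ℝ)
    (ht : ∀ j, t j = (∑ᶠ σ ∈ Λ j, m σ * Real.log (m σ)) /
                     (∑ᶠ σ ∈ Λ j, m σ * Real.log (c σ)))
    (htj : ∀ j : ℕ, max 1 J0 ≤ j → |t j - s0| ≤ C4 / (j : ℝ)) :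
    0 < Filter.atTop.liminf
        (fun j : ℕ => ENNReal.ofReal ((ψ j : ℝ) ^ (1 / s0) * geErr (ψ j) μ)) ∧
      Filter.atTop.liminf
          (fun j : ℕ => ENNReal.ofReal ((ψ j : ℝ) ^ (1 / s0) * geErr (ψ j) μ)) ≤
        Filter.atTop.limsup
          (fun j : ℕ => ENNReal.ofReal ((ψ j : ℝ) ^ (1 / s0) * geErr (ψ j) μ)) ∧
      Filter.atTop.limsup
          (fun j : ℕ => ENNReal.ofReal ((ψ j : ℝ) ^ (1 / s0) * geErr (ψ j) μ)) < ⊤ := by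
  obtain ⟨hp0, hp1⟩ := hpmin
  obtain ⟨hq0, hq1⟩ := hqmin
  obtain ⟨hQ0, hQ1⟩ := hqmax
  set K := (log qmax - log qmin - log pmin) / s0 +
    2 * ((-log qmin - 2 * log pmin) * C4) / s0 ^ 2
  refine liminf_ofReal_pos_and_le_limsup_and_limsup_lt_top
    (b := exp (K + |C0|)) (exp_pos (-(K + |C0|))) ?_
  filter_upwards [eventually_ge_atTop (max 1 J0),
    (tendsto_const_div_atTop_nhds_zero_nat C4).eventually (eventually_le_nhds (half_pos hs0))]
    with j hj hC4j
  obtain ⟨hj1, hjJ0⟩ := max_le_iff.mp hj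
  have hΛ (f : ι → ℝ) : ∑ᶠ σ ∈ Λ j, f σ = ∑ σ ∈ (hfin j).toFinset, f σ :=
    finsum_mem_eq_finite_toFinset_sum f (hfin j)
  obtain ⟨hlo, hhi⟩ := hsand j hjJ0
  have htS := ht j
  have hm1 := hsum1 j
  simp only [hΛ] at hlo hhi htS hm1
  obtain ⟨hS, hQ⟩ := abs_log_div_add_le_of_mem_Icc hj1 (log_neg hq0 hq1) (log_neg hQ0 hQ1)
    (log_neg hp0 hp1) hs0
    (sum_mul_log_mem_Icc_of_pow_bounds hq0 hp0 hm hqh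
      (fun σ hσ => hpΛ j σ ((hfin j).mem_toFinset.1 hσ)) hm1)
    (neg_log_mem_Icc_of_inv_pow_bounds hq0 hQ0 hp0 (hψ j hj1)) htS (htj j hj) hC4j
  have hψ0 : (0 : ℝ) < ψ j := lt_of_lt_of_le (by positivity) (hψ j hj1).1
  exact rpow_one_div_mul_mem_Icc hψ0 (geErr_pos_of_log_neg (hhi.trans_lt hS)) hlo hhi hQ

theorem stmt15 {E ι : Type*} [NormedAddCommGroup E] [MeasurableSpace E]
    (μ : Measure E) [IsProbabilityMeasure μ]
    (Λ : ℕ → Set ι) (hfin : ∀ j, (Λ j).Finite)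
    (p c m qh : ι → ℝ)
    (pmin qmin qmax : ℝ)
    (hpmin : 0 < pmin ∧ pmin < 1) (hqmin : 0 < qmin ∧ qmin < 1)
    (hqmax : 0 < qmax ∧ qmax < 1) (hqmm : qmin ≤ qmax)
    (hm : ∀ σ, m σ = qh σ * p σ)
    (hqh : ∀ σ, qmin ≤ qh σ ∧ qh σ ≤ qmax)
    (hpΛ : ∀ j : ℕ, ∀ σ ∈ Λ j, pmin ^ (j + 1) ≤ p σ ∧ p σ < pmin ^ j)
    (hsum1 : ∀ j : ℕ, (∑ᶠ σ ∈ Λ j, m σ) = 1)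
    (ψ : ℕ → ℕ) (hψdef : ∀ j, ψ j = (Λ j).ncard)
    (hψ : ∀ j : ℕ, 1 ≤ j → qmax⁻¹ * (pmin ^ j)⁻¹ ≤ (ψ j : ℝ) ∧
      (ψ j : ℝ) ≤ qmin⁻¹ * (pmin ^ (j + 1))⁻¹)
    (C0 C4 s0 : ℝ) (hs0 : 0 < s0) (J0 : ℕ)
    (hsand : ∀ j : ℕ, J0 ≤ j →
      (∑ᶠ σ ∈ Λ j, m σ * Real.log (c σ)) + C0 ≤ Real.log (geErr (ψ j) μ) ∧
      Real.log (geErr (ψ j) μ) ≤ ∑ᶠ σ ∈ Λ j, m σ * Real.log (c σ))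
    (t : ℕ → ℝ)
    (ht : ∀ j, t j = (∑ᶠ σ ∈ Λ j, m σ * Real.log (m σ)) /
                     (∑ᶠ σ ∈ Λ j, m σ * Real.log (c σ)))
    (htj : ∀ j : ℕ, max 1 J0 ≤ j → |t j - s0| ≤ C4 / (j : ℝ)) :
    0 < Filter.atTop.liminf
        (fun j : ℕ => ENNReal.ofReal ((ψ j : ℝ) ^ (1 / s0) * geErr (ψ j) μ)) ∧
      Filter.atTop.liminf
          (fun j : ℕ => ENNReal.ofReal ((ψ j : ℝ) ^ (1 / s0) * geErr (ψ j) μ)) ≤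
        Filter.atTop.limsup
          (fun j : ℕ => ENNReal.ofReal ((ψ j : ℝ) ^ (1 / s0) * geErr (ψ j) μ)) ∧
      Filter.atTop.limsup
          (fun j : ℕ => ENNReal.ofReal ((ψ j : ℝ) ^ (1 / s0) * geErr (ψ j) μ)) < ⊤ :=
  stmt15_general μ Λ hfin p c m qh pmin qmin qmax hpmin hqmin hqmax hm hqh hpΛ hsum1 ψ hψ C0 C4 s0
    hs0 J0 hsand t ht htj
end
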